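/- arXiv:2007.06806 — 7 statements merged into one kernel-verified Lean document; each statement's English description precedes it below -/
import Mathlib

section
/- The roots α(d) and β(d) of adx²+(bd-1)x+d=0 are respectively strictly increasing and strictly decreasing functions of d on (0, 1/(b+2√a)), and both tend to 1/√a as d→1/(b+2√a)⁻. -/
/-!
Dividing by `d` turns the equation into `a x² - u x + 1 = 0` with `u = 1/d - b`, a strictly
decreasing function of `d` that exceeds `2√a` exactly on `(0, 1/(b+2√a))` and tends to `2√a` at
the right end. The larger root `β = (u + √(u² - 4a)) / (2a)` increases with `u`, and by Vieta
`α = 1 / (a β)`. Hence `β` decreases and `α` increases in `d`, and at `u = 2√a` the two roots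
merge into the double root `1/√a`.
-/

open Set Filter Topology

noncomputable def largeRoot (a u : ℝ) : ℝ := (u + √(u ^ 2 - 4 * a)) / (2 * a)

noncomputable def smallRoot (a u : ℝ) : ℝ := (u - √(u ^ 2 - 4 * a)) / (2 * a)

variable {a b d u : ℝ}

lemma largeRoot_strictMonoOn (ha : 0 < a) : StrictMonoOn (largeRoot a) (Ici 0) := by
  intro x hx y hy hxy
  have : √(x ^ 2 - 4 * a) ≤ √(y ^ 2 - 4 * a) :=
    Real.sqrt_le_sqrt (by nlinarith [mem_Ici.mp hx])
  exact div_lt_div_of_pos_right (by linarith) (by positivity)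

lemma largeRoot_pos (ha : 0 < a) (hu : 0 < u) : 0 < largeRoot a u := by
  unfold largeRoot
  positivity

lemma continuous_largeRoot (a : ℝ) : Continuous (largeRoot a) := by
  unfold largeRoot
  fun_prop

lemma largeRoot_two_mul_sqrt (ha : 0 < a) : largeRoot a (2 * √a) = 1 / √a := by
  have hdisc : (2 * √a) ^ 2 - 4 * a = 0 := by
    rw [mul_pow, Real.sq_sqrt ha.le]
    ring
  rw [largeRoot, hdisc, Real.sqrt_zero, add_zero]
  field_simp
  rw [Real.sq_sqrt ha.le]

lemma smallRoot_mul_largeRoot (ha : a ≠ 0) (hu : 4 * a ≤ u ^ 2) :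
    smallRoot a u * largeRoot a u = 1 / a := by
  have hw : √(u ^ 2 - 4 * a) ^ 2 = u ^ 2 - 4 * a := Real.sq_sqrt (by linarith)
  unfold smallRoot largeRoot
  field_simp
  linear_combination -hw

lemma sqrt_discrim_eq (hd : 0 < d) :
    √((b * d - 1) ^ 2 - 4 * a * d ^ 2) = d * √((1 / d - b) ^ 2 - 4 * a) := by
  have hdisc : (b * d - 1) ^ 2 - 4 * a * d ^ 2 = d ^ 2 * ((1 / d - b) ^ 2 - 4 * a) := by
    field_simp
    ring
  rw [hdisc, Real.sqrt_mul (sq_nonneg d), Real.sqrt_sq hd.le]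

lemma add_sqrt_discrim_div_eq_largeRoot (hd : 0 < d) :
    (1 - b * d + √((b * d - 1) ^ 2 - 4 * a * d ^ 2)) / (2 * a * d) = largeRoot a (1 / d - b) := by
  rw [sqrt_discrim_eq hd, largeRoot, ← mul_div_mul_left _ (2 * a) hd.ne']
  congr 1 <;> field_simp

lemma sub_sqrt_discrim_div_eq_smallRoot (hd : 0 < d) :
    (1 - b * d - √((b * d - 1) ^ 2 - 4 * a * d ^ 2)) / (2 * a * d) = smallRoot a (1 / d - b) := by
  rw [sqrt_discrim_eq hd, smallRoot, ← mul_div_mul_left _ (2 * a) hd.ne']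
  congr 1 <;> field_simp

lemma smallRoot_eq_one_div_mul_largeRoot (ha : 0 < a) (hu : 2 * √a < u) :
    smallRoot a u = 1 / (a * largeRoot a u) := by
  have hu2 : 4 * a ≤ u ^ 2 := by nlinarith [Real.sq_sqrt ha.le, Real.sqrt_nonneg a]
  have hL := largeRoot_pos ha (by linarith [Real.sqrt_nonneg a])
  rw [one_div, mul_inv, ← one_div, ← smallRoot_mul_largeRoot ha.ne' hu2,
    mul_inv_cancel_right₀ hL.ne']

lemma lt_one_div_sub_of_mem_Ioo {c : ℝ} (hc : 0 < b + c) (hd : d ∈ Ioo 0 (1 / (b + c))) :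
    c < 1 / d - b := by
  have := (lt_one_div hd.1 hc).mp hd.2
  linarith

lemma strictAntiOn_largeRoot_one_div_sub (ha : 0 < a) (hc : 0 < b + 2 * √a) :
    StrictAntiOn (fun d => largeRoot a (1 / d - b)) (Ioo 0 (1 / (b + 2 * √a))) := by
  intro x hx y hy hxy
  have hy' := lt_one_div_sub_of_mem_Ioo hc hy
  have hyx : 1 / y < 1 / x := one_div_lt_one_div_of_lt hx.1 hxy
  exact largeRoot_strictMonoOn ha (by simp only [mem_Ici]; linarith [Real.sqrt_nonneg a])
    (by simp only [mem_Ici]; linarith [Real.sqrt_nonneg a]) (by linarith)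

lemma tendsto_largeRoot_one_div_sub (ha : 0 < a) (hc : 0 < b + 2 * √a) :
    Tendsto (fun d => largeRoot a (1 / d - b)) (𝓝[<] (1 / (b + 2 * √a))) (𝓝 (1 / √a)) := by
  have hcont : ContinuousAt (fun d => largeRoot a (1 / d - b)) (1 / (b + 2 * √a)) :=
    (continuous_largeRoot a).continuousAt.comp (by fun_prop (disch := positivity))
  have hval : largeRoot a (1 / (1 / (b + 2 * √a)) - b) = 1 / √a := by
    rw [one_div_one_div, add_sub_cancel_left, largeRoot_two_mul_sqrt ha]
  rw [← hval]
  exact hcont.tendsto.mono_left nhdsWithin_le_nhds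

/-- The roots `α(d)` and `β(d)` of `a d x² + (b d - 1) x + d = 0` are respectively
strictly increasing and strictly decreasing on `(0, 1/(b+2√a))`, and both tend to
`1/√a` as `d → (1/(b+2√a))⁻`. -/
theorem stmt_4 (a b : ℝ) (ha : 0 < a) (hb : -2 * Real.sqrt a < b)
    (α β : ℝ → ℝ)
    (hα : ∀ d, α d = (1 - b * d - Real.sqrt ((b * d - 1) ^ 2 - 4 * a * d ^ 2)) / (2 * a * d))
    (hβ : ∀ d, β d = (1 - b * d + Real.sqrt ((b * d - 1) ^ 2 - 4 * a * d ^ 2)) / (2 * a * d)) :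
    StrictMonoOn α (Set.Ioo 0 (1 / (b + 2 * Real.sqrt a))) ∧
    StrictAntiOn β (Set.Ioo 0 (1 / (b + 2 * Real.sqrt a))) ∧
    Filter.Tendsto α (nhdsWithin (1 / (b + 2 * Real.sqrt a))
      (Set.Iio (1 / (b + 2 * Real.sqrt a)))) (nhds (1 / Real.sqrt a)) ∧
    Filter.Tendsto β (nhdsWithin (1 / (b + 2 * Real.sqrt a))
      (Set.Iio (1 / (b + 2 * Real.sqrt a)))) (nhds (1 / Real.sqrt a)) := by
  have hc : 0 < b + 2 * √a := by linarith
  have hD : 0 < 1 / (b + 2 * √a) := by positivity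
  have hβ_eq : EqOn β (fun d => largeRoot a (1 / d - b)) (Ioo 0 (1 / (b + 2 * √a))) :=
    fun d hd => (hβ d).trans (add_sqrt_discrim_div_eq_largeRoot hd.1)
  have hα_eq : EqOn α (fun d => 1 / (a * β d)) (Ioo 0 (1 / (b + 2 * √a))) := fun d hd => by
    rw [hα, sub_sqrt_discrim_div_eq_smallRoot hd.1,
      smallRoot_eq_one_div_mul_largeRoot ha (lt_one_div_sub_of_mem_Ioo hc hd)]
    exact congrArg (fun y => 1 / (a * y)) (hβ_eq hd).symm
  have hβ_pos : ∀ d ∈ Ioo 0 (1 / (b + 2 * √a)), 0 < β d := fun d hd =>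
    hβ_eq hd ▸
      largeRoot_pos ha (by linarith [lt_one_div_sub_of_mem_Ioo hc hd, Real.sqrt_nonneg a])
  have hβ_anti := (strictAntiOn_largeRoot_one_div_sub ha hc).congr hβ_eq.symm
  have hβ_lim : Tendsto β (𝓝[<] (1 / (b + 2 * √a))) (𝓝 (1 / √a)) :=
    (tendsto_largeRoot_one_div_sub ha hc).congr'
      (eventuallyEq_of_mem (Ioo_mem_nhdsLT hD) hβ_eq.symm)
  refine ⟨fun x hx y hy hxy => ?_, hβ_anti, ?_, hβ_lim⟩
  · rw [hα_eq hx, hα_eq hy]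
    have := hβ_pos y hy
    exact one_div_lt_one_div_of_lt (by positivity) (mul_lt_mul_of_pos_left (hβ_anti hx hy hxy) ha)
  · have hval : 1 / (a * (1 / √a)) = 1 / √a := by rw [mul_one_div, Real.div_sqrt]
    have hlim : Tendsto (fun d => 1 / (a * β d)) (𝓝[<] (1 / (b + 2 * √a))) (𝓝 (1 / √a)) := by
      rw [← hval]
      exact tendsto_const_nhds.div (tendsto_const_nhds.mul hβ_lim) (by positivity)
    exact hlim.congr' (eventuallyEq_of_mem (Ioo_mem_nhdsLT hD) hα_eq.symm)
end

section
/- The threshold A*=(2K√a-3)/(Ka-2√a) satisfies -K<A*<K and A*<1/√a if and only if 1/√a<K<√3/√a. -/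
/-!
Put `s = √a` and `t = K s`. Since `a = s²`, the threshold is `A* = B(t) / s` with
`B(t) = (2t - 3)/(t - 2)`, so after multiplying by `s > 0` the three conditions read
`-t < B(t) < t` and `B(t) < 1`, while the right-hand side reads `1 < t < √3`.
Now `B(t) < 1` holds exactly for `1 < t < 2`; on that interval `-t < B(t)` amounts to `t² < 3`,
and `B(t) < t` amounts to `(t - 1)(t - 3) < 0`, which always holds.
-/

/-- The rescaled threshold `√a · A*` as a function of `t = K√a`. -/
noncomputable def scaledThreshold (t : ℝ) : ℝ := (2 * t - 3) / (t - 2)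

lemma scaledThreshold_lt_one_iff {t : ℝ} (ht : t ≠ 2) :
    scaledThreshold t < 1 ↔ 1 < t ∧ t < 2 := by
  unfold scaledThreshold
  rcases ht.lt_or_gt with h | h
  · rw [div_lt_iff_of_neg (by linarith)]
    exact ⟨fun _ => ⟨by linarith, h⟩, fun _ => by linarith⟩
  · rw [div_lt_iff₀ (by linarith)]
    exact ⟨fun _ => by linarith, fun h' => by linarith [h'.2]⟩

lemma neg_lt_scaledThreshold_iff {t : ℝ} (ht : t < 2) :
    -t < scaledThreshold t ↔ t ^ 2 < 3 := by
  unfold scaledThreshold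
  rw [lt_div_iff_of_neg (by linarith)]
  constructor <;> intro <;> nlinarith

lemma scaledThreshold_lt_self {t : ℝ} (h1 : 1 < t) (h2 : t < 2) : scaledThreshold t < t := by
  unfold scaledThreshold
  rw [div_lt_iff_of_neg (by linarith)]
  nlinarith

lemma scaledThreshold_bounds_iff {t : ℝ} (ht : t ≠ 2) :
    (-t < scaledThreshold t ∧ scaledThreshold t < t ∧ scaledThreshold t < 1) ↔
      1 < t ∧ t < Real.sqrt 3 := by
  have hsqrt3 : Real.sqrt 3 < 2 := by
    rw [Real.sqrt_lt' two_pos]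
    norm_num
  constructor
  · rintro ⟨hneg, -, hone⟩
    obtain ⟨h1, h2⟩ := (scaledThreshold_lt_one_iff ht).1 hone
    refine ⟨h1, ?_⟩
    rw [Real.lt_sqrt (by linarith)]
    exact (neg_lt_scaledThreshold_iff h2).1 hneg
  · rintro ⟨h1, h3⟩
    have h2 : t < 2 := h3.trans hsqrt3
    refine ⟨(neg_lt_scaledThreshold_iff h2).2 ?_, scaledThreshold_lt_self h1 h2,
      (scaledThreshold_lt_one_iff ht).2 ⟨h1, h2⟩⟩
    rwa [← Real.lt_sqrt (by linarith)]

lemma threshold_eq_scaledThreshold_div (K s : ℝ) :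
    (2 * K * s - 3) / (K * (s * s) - 2 * s) = scaledThreshold (K * s) / s := by
  unfold scaledThreshold
  rw [div_div, show K * (s * s) - 2 * s = (K * s - 2) * s by ring]
  ring

theorem stmt_6_general (a K : ℝ) (ha : 0 < a) (hK2 : K ≠ 2 / Real.sqrt a) :
    (-K < (2 * K * Real.sqrt a - 3) / (K * a - 2 * Real.sqrt a) ∧
     (2 * K * Real.sqrt a - 3) / (K * a - 2 * Real.sqrt a) < K ∧
     (2 * K * Real.sqrt a - 3) / (K * a - 2 * Real.sqrt a) < 1 / Real.sqrt a) ↔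
    (1 / Real.sqrt a < K ∧ K < Real.sqrt 3 / Real.sqrt a) := by
  have hs : 0 < Real.sqrt a := Real.sqrt_pos.2 ha
  have ht : K * Real.sqrt a ≠ 2 := by
    rwa [Ne, ← eq_div_iff hs.ne']
  have hA := threshold_eq_scaledThreshold_div K (Real.sqrt a)
  rw [Real.mul_self_sqrt ha.le] at hA
  rw [hA, lt_div_iff₀ hs, div_lt_iff₀ hs, div_lt_div_iff_of_pos_right hs, div_lt_iff₀ hs,
    lt_div_iff₀ hs, neg_mul]
  exact scaledThreshold_bounds_iff ht

/-- The threshold `A* = (2K√a - 3)/(Ka - 2√a)` satisfies `-K < A* < K` and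
`A* < 1/√a` if and only if `1/√a < K < √3/√a`. -/
theorem stmt_6 (a K : ℝ) (ha : 0 < a) (hK : 0 < K) (hK2 : K ≠ 2 / Real.sqrt a) :
    (-K < (2 * K * Real.sqrt a - 3) / (K * a - 2 * Real.sqrt a) ∧
     (2 * K * Real.sqrt a - 3) / (K * a - 2 * Real.sqrt a) < K ∧
     (2 * K * Real.sqrt a - 3) / (K * a - 2 * Real.sqrt a) < 1 / Real.sqrt a) ↔
    (1 / Real.sqrt a < K ∧ K < Real.sqrt 3 / Real.sqrt a) :=
  stmt_6_general a K ha hK2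
end

section
/- With A=A* and α=1/√a, the condition G''(α)=0 holds if and only if b=b*:=-√a(K²a-4K√a+5)/(K²a-3K√a+3); moreover b*>-2√a for all a,K with 1/√a<K<√3/√a. -/
/-! With `s = √a` and `t = K s`, `G b` is the product of the quadratics `(x - A*)(K - x)` and
`s²x² + b x + 1`, so by Leibniz' rule `(G b)''(1/s)` is affine in `b`; its slope
`2(t² - 3t + 3)/(s(t - 2))` does not vanish for `1 < t < √3`, and its zero is `b*`.
Finally `b* + 2s = s(t - 1)²/(t² - 3t + 3) > 0`. -/

open Polynomial

theorem Polynomial.deriv_deriv_eval {𝕜 : Type*} [NontriviallyNormedField 𝕜] (p : 𝕜[X]) (x : 𝕜) :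
    deriv (deriv fun y => p.eval y) x = (derivative (derivative p)).eval x := by
  have h : deriv (fun y => p.eval y) = fun y => (derivative p).eval y := by
    ext y; exact Polynomial.deriv p
  rw [h, Polynomial.deriv]

theorem Polynomial.derivative_derivative_mul {R : Type*} [CommSemiring R] (p q : R[X]) :
    derivative (derivative (p * q)) =
      derivative (derivative p) * q + 2 * (derivative p * derivative q) +
        p * derivative (derivative q) := by
  simp only [derivative_mul, derivative_add]; ring

theorem deriv_deriv_quadratic_mul_quadratic {𝕜 : Type*} [NontriviallyNormedField 𝕜]
    (A K a b x : 𝕜) :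
    deriv (deriv fun y => (y - A) * (K - y) * (a * y ^ 2 + b * y + 1)) x =
      -2 * (a * x ^ 2 + b * x + 1) + 2 * (K + A - 2 * x) * (2 * a * x + b) +
        2 * a * (x - A) * (K - x) := by
  have hpoly : (fun y => (y - A) * (K - y) * (a * y ^ 2 + b * y + 1)) =
      fun y => (((X - C A) * (C K - X)) * (C a * X ^ 2 + C b * X + 1)).eval y := by
    funext y; simp
  rw [hpoly, deriv_deriv_eval, derivative_derivative_mul]
  simp only [derivative_mul, derivative_sub, derivative_X, derivative_C, sub_zero, one_mul, zero_sub,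
    mul_neg, mul_one, neg_sub, zero_mul, derivative_X_pow_succ, Nat.cast_one, map_add, map_one,
    pow_one, zero_add, derivative_one, add_zero, eval_add, eval_mul, eval_neg, eval_one, eval_C,
    eval_pow, eval_X, eval_ofNat, eval_sub, neg_mul]
  ring

noncomputable def criticalB (s K : ℝ) : ℝ :=
  -s * (K ^ 2 * s ^ 2 - 4 * K * s + 5) / (K ^ 2 * s ^ 2 - 3 * K * s + 3)

theorem criticalB_denom_pos (s K : ℝ) : 0 < K ^ 2 * s ^ 2 - 3 * K * s + 3 := by
  nlinarith [sq_nonneg (K * s - 3 / 2)]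

theorem deriv_deriv_eq_mul_sub_criticalB (s K b : ℝ) (hs : s ≠ 0) (hK : K * s ≠ 2) :
    deriv (deriv fun x => (x - (2 * K * s - 3) / (K * s ^ 2 - 2 * s)) * (K - x) *
        (s ^ 2 * x ^ 2 + b * x + 1)) (1 / s) =
      2 * (K ^ 2 * s ^ 2 - 3 * K * s + 3) / (s * (K * s - 2)) * (b - criticalB s K) := by
  rw [deriv_deriv_quadratic_mul_quadratic, criticalB]
  have h1 : s * K - 2 ≠ 0 := by rw [mul_comm]; exact sub_ne_zero.2 hK
  have h2 : s * K * (s * K - 3) + 3 ≠ 0 := by nlinarith [criticalB_denom_pos s K]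
  field_simp
  ring

theorem deriv_deriv_eq_zero_iff_eq_criticalB (s K b : ℝ) (hs : s ≠ 0) (hK : K * s ≠ 2) :
    deriv (deriv fun x => (x - (2 * K * s - 3) / (K * s ^ 2 - 2 * s)) * (K - x) *
        (s ^ 2 * x ^ 2 + b * x + 1)) (1 / s) = 0 ↔ b = criticalB s K := by
  have hcoeff : 2 * (K ^ 2 * s ^ 2 - 3 * K * s + 3) / (s * (K * s - 2)) ≠ 0 :=
    div_ne_zero (mul_ne_zero two_ne_zero (criticalB_denom_pos s K).ne')
      (mul_ne_zero hs (sub_ne_zero.2 hK))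
  rw [deriv_deriv_eq_mul_sub_criticalB s K b hs hK, mul_eq_zero, or_iff_right hcoeff, sub_eq_zero]

theorem neg_two_mul_lt_criticalB {s K : ℝ} (hs : 0 < s) (hK : K * s ≠ 1) :
    -2 * s < criticalB s K := by
  rw [criticalB, lt_div_iff₀ (criticalB_denom_pos s K)]
  nlinarith [mul_pos hs (sq_pos_of_ne_zero (sub_ne_zero.2 hK))]

/-- With `A = A*` and `α = 1/√a`, the condition `G''(α) = 0` holds iff
`b = b* = -√a(K²a - 4K√a + 5)/(K²a - 3K√a + 3)`; moreover `b* > -2√a`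
for all `a, K` with `1/√a < K < √3/√a`. -/
theorem stmt_8 (a K : ℝ) (ha : 0 < a)
    (hK1 : 1 / Real.sqrt a < K) (hK3 : K < Real.sqrt 3 / Real.sqrt a)
    (G : ℝ → ℝ → ℝ)
    (hG : ∀ b x, G b x =
      (x - (2 * K * Real.sqrt a - 3) / (K * a - 2 * Real.sqrt a)) * (K - x) *
        (a * x ^ 2 + b * x + 1)) :
    (∀ b : ℝ, deriv (deriv (G b)) (1 / Real.sqrt a) = 0 ↔
      b = -Real.sqrt a * (K ^ 2 * a - 4 * K * Real.sqrt a + 5) /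
            (K ^ 2 * a - 3 * K * Real.sqrt a + 3)) ∧
    -Real.sqrt a * (K ^ 2 * a - 4 * K * Real.sqrt a + 5) /
        (K ^ 2 * a - 3 * K * Real.sqrt a + 3) > -2 * Real.sqrt a := by
  obtain ⟨s, hs, rfl⟩ : ∃ s : ℝ, 0 < s ∧ s ^ 2 = a :=
    ⟨Real.sqrt a, Real.sqrt_pos.2 ha, Real.sq_sqrt ha.le⟩
  simp only [Real.sqrt_sq hs.le] at hK1 hK3 hG ⊢
  have hKs1 : 1 < K * s := by rwa [div_lt_iff₀ hs] at hK1
  have hKs2 : K * s < 2 := by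
    have : Real.sqrt 3 < 2 := by rw [Real.sqrt_lt' two_pos]; norm_num
    rw [lt_div_iff₀ hs] at hK3
    linarith
  refine ⟨fun b => ?_, neg_two_mul_lt_criticalB hs hKs1.ne'⟩
  rw [show G b = _ from funext (hG b)]
  exact deriv_deriv_eq_zero_iff_eq_criticalB s K b hs.ne' hKs2.ne
end

section
/- For ℓ∈(1,√3), the quantity ζ = -a^{7/2}(ℓ-2)²(3ℓ⁴-22ℓ³+62ℓ²-78ℓ+39)/((ℓ²-3ℓ+3)⁶(ℓ-1)) is strictly negative; equivalently, the quartic 3ℓ⁴-22ℓ³+62ℓ²-78ℓ+39 is positive on (1,√3). -/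
/-- For `ℓ ∈ (1, √3)`, the quantity
`ζ = -a^{7/2}(ℓ-2)²(3ℓ⁴-22ℓ³+62ℓ²-78ℓ+39)/((ℓ²-3ℓ+3)⁶(ℓ-1))` is strictly negative;
equivalently the quartic `3ℓ⁴-22ℓ³+62ℓ²-78ℓ+39` is positive on `(1, √3)`. -/
theorem stmt_9 (a ℓ : ℝ) (ha : 0 < a) (hℓ1 : 1 < ℓ) (hℓ3 : ℓ < Real.sqrt 3) :
    -(a ^ ((7 : ℝ) / 2)) * (ℓ - 2) ^ 2 * (3 * ℓ ^ 4 - 22 * ℓ ^ 3 + 62 * ℓ ^ 2 - 78 * ℓ + 39) /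
      ((ℓ ^ 2 - 3 * ℓ + 3) ^ 6 * (ℓ - 1)) < 0 ∧
    0 < 3 * ℓ ^ 4 - 22 * ℓ ^ 3 + 62 * ℓ ^ 2 - 78 * ℓ + 39 := by
  have h2 : ℓ ^ 2 < 3 := by
    have := Real.sq_sqrt (by norm_num : (3:ℝ) ≥ 0)
    nlinarith [Real.sqrt_nonneg 3]
  have hq : 0 < 3 * ℓ ^ 4 - 22 * ℓ ^ 3 + 62 * ℓ ^ 2 - 78 * ℓ + 39 := by
    nlinarith [sq_nonneg (ℓ - 1), sq_nonneg (ℓ^2 - 3), sq_nonneg (ℓ^2 - 3*ℓ + 2), mul_pos (sub_pos.2 hℓ1) (sub_pos.2 h2 : (0:ℝ) < 3 - ℓ^2)]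
  refine ⟨?_, hq⟩
  have hsq : 0 < (ℓ - 2) ^ 2 := by
    have h : ℓ < 2 := by nlinarith
    nlinarith
  have hpow : 0 < a ^ ((7 : ℝ) / 2) := Real.rpow_pos_of_pos ha _
  apply div_neg_of_neg_of_pos
  · nlinarith [mul_pos hsq hq, mul_pos hpow (mul_pos hsq hq)]
  · have h : 0 < ℓ ^ 2 - 3 * ℓ + 3 := by nlinarith [sq_nonneg (2*ℓ - 3)]
    exact mul_pos (pow_pos h 6) (sub_pos.2 hℓ1)
end

section
/- Any closed orbit of the system x'=x(K-x)(x-A)-p(x)y, y'=y(p(x)-d) in the positive quadrant lies entirely in the strip {(x,y): max{0,A} ≤ x ≤ min{β,K}, y>0}, where β is the larger root of adx²+(bd-1)x+d=0 (taken as +∞ if no real roots). -/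
/-!
At a time where the prey density `x` of a periodic orbit is extremal, `x' = 0`, so the growth
`x (K - x) (x - A)` equals the predation `p(x) y > 0`; this forces `A < x < K` there.  At a
maximum of `x` moreover `x'' = -p(x) y (p(x) - d) ≤ 0`, so `p(x) ≥ d`, which places the
maximum below the larger root `β` of `a d x² + (b d - 1) x + d`.
-/

open Filter Function Set Topology

theorem Function.Periodic.exists_forall_le_of_continuous {α : Type*} [LinearOrder α]
    [TopologicalSpace α] [ClosedIciTopology α] {f : ℝ → α} {c : ℝ} (hp : Periodic f c)
    (hc : c ≠ 0) (hf : Continuous f) : ∃ t, ∀ s, f s ≤ f t := by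
  obtain ⟨_, ⟨t, rfl⟩, ht⟩ :=
    (hp.compact_of_continuous hc hf).exists_isGreatest (range_nonempty f)
  exact ⟨t, fun s => ht ⟨s, rfl⟩⟩

theorem Function.Periodic.exists_forall_ge_of_continuous {α : Type*} [LinearOrder α]
    [TopologicalSpace α] [ClosedIicTopology α] {f : ℝ → α} {c : ℝ} (hp : Periodic f c)
    (hc : c ≠ 0) (hf : Continuous f) : ∃ t, ∀ s, f t ≤ f s := by
  obtain ⟨_, ⟨t, rfl⟩, ht⟩ :=
    (hp.compact_of_continuous hc hf).exists_isLeast (range_nonempty f)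
  exact ⟨t, fun s => ht ⟨s, rfl⟩⟩

theorem IsLocalMax.deriv_deriv_nonpos {f : ℝ → ℝ} {x₀ : ℝ} (h : IsLocalMax f x₀)
    (hc : ContinuousAt f x₀) : deriv (deriv f) x₀ ≤ 0 := by
  by_contra! hpos
  have hmin := isLocalMin_of_deriv_deriv_pos hpos h.deriv_eq_zero hc
  have hconst : f =ᶠ[𝓝 x₀] fun _ => f x₀ := by
    filter_upwards [h, hmin] with x hle hge using le_antisymm hle hge
  rw [hconst.deriv.deriv_eq, deriv_const', deriv_const] at hpos
  exact hpos.false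

section PredatorPrey

variable {g p X Y : ℝ → ℝ} {d t₀ : ℝ}

theorem growth_eq_predation_of_isLocalExtr
    (hX : HasDerivAt X (g (X t₀) - p (X t₀) * Y t₀) t₀) (h : IsLocalExtr X t₀) :
    g (X t₀) = p (X t₀) * Y t₀ :=
  sub_eq_zero.mp (h.hasDerivAt_eq_zero hX)

theorem le_response_of_isLocalMax (hX : ∀ t, HasDerivAt X (g (X t) - p (X t) * Y t) t)
    (hY : HasDerivAt Y (Y t₀ * (p (X t₀) - d)) t₀) (hg : DifferentiableAt ℝ g (X t₀))
    (hp : DifferentiableAt ℝ p (X t₀)) (hpred : 0 < p (X t₀) * Y t₀)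
    (hmax : IsLocalMax X t₀) :
    d ≤ p (X t₀) := by
  have hX₀ : HasDerivAt X 0 t₀ := hmax.hasDerivAt_eq_zero (hX t₀) ▸ hX t₀
  have hX' : deriv X = fun t => g (X t) - p (X t) * Y t := funext fun t => (hX t).deriv
  have hX'' : HasDerivAt (deriv X) (-(p (X t₀) * Y t₀ * (p (X t₀) - d))) t₀ := by
    rw [hX']
    refine ((hg.hasDerivAt.comp t₀ hX₀).sub
      ((hp.hasDerivAt.comp t₀ hX₀).mul hY)).congr_deriv ?_
    simp only [comp_apply]
    ring
  have hconcave := hmax.deriv_deriv_nonpos (hX t₀).continuousAt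
  rw [hX''.deriv] at hconcave
  nlinarith

end PredatorPrey

theorem mem_Ioo_of_allee_growth_pos {x K A : ℝ} (hx : 0 < x) (hAK : A < K)
    (h : 0 < x * (K - x) * (x - A)) : x ∈ Ioo A K := by
  constructor <;> by_contra! hle
  · nlinarith [mul_nonneg (mul_pos hx (by linarith : 0 < K - x)).le (sub_nonneg.2 hle)]
  · nlinarith [mul_nonneg (mul_pos hx (by linarith : 0 < x - A)).le (sub_nonneg.2 hle)]

theorem holling_denom_pos {a b x : ℝ} (ha : 0 < a) (hb : -2 * Real.sqrt a < b) (hx : 0 < x) :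
    0 < a * x ^ 2 + b * x + 1 := by
  nlinarith [sq_nonneg (Real.sqrt a * x - 1), Real.sq_sqrt ha.le,
    mul_pos (show 0 < b + 2 * Real.sqrt a by linarith) hx]

theorem le_larger_root_of_le_holling {a b d x : ℝ} (ha : 0 < a) (hd : 0 < d)
    (hden : 0 < a * x ^ 2 + b * x + 1) (h : d ≤ x / (a * x ^ 2 + b * x + 1))
    (hΔ : 0 ≤ (b * d - 1) ^ 2 - 4 * a * d ^ 2) :
    x ≤ (1 - b * d + Real.sqrt ((b * d - 1) ^ 2 - 4 * a * d ^ 2)) / (2 * a * d) := by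
  rw [le_div_iff₀ hden] at h
  rw [le_div_iff₀ (by positivity)]
  by_contra! hlt
  have hsq := Real.sq_sqrt hΔ
  have hsqrt := Real.sqrt_nonneg ((b * d - 1) ^ 2 - 4 * a * d ^ 2)
  nlinarith [mul_pos ha hd]

theorem stmt_13_general (a b K A d : ℝ) (ha : 0 < a) (hb : -2 * Real.sqrt a < b)
    (hA2 : A < K) (hd : 0 < d)
    (p : ℝ → ℝ) (hp : ∀ x, p x = x / (a * x ^ 2 + b * x + 1))
    (γ : ℝ → ℝ × ℝ) (T : ℝ) (hT : 0 < T)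
    (hperiodic : ∀ t, γ (t + T) = γ t)
    (hpos : ∀ t, 0 < (γ t).1 ∧ 0 < (γ t).2)
    (hode : ∀ t, HasDerivAt γ
      ((γ t).1 * (K - (γ t).1) * ((γ t).1 - A) - p (γ t).1 * (γ t).2,
       (γ t).2 * (p (γ t).1 - d)) t) :
    ∀ t, max 0 A ≤ (γ t).1 ∧ (γ t).1 ≤ K ∧ 0 < (γ t).2 ∧
      ((b * d - 1) ^ 2 - 4 * a * d ^ 2 ≥ 0 →
        (γ t).1 ≤ (1 - b * d + Real.sqrt ((b * d - 1) ^ 2 - 4 * a * d ^ 2)) / (2 * a * d)) := by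
  set X : ℝ → ℝ := fun t => (γ t).1
  set Y : ℝ → ℝ := fun t => (γ t).2
  set g : ℝ → ℝ := fun x => x * (K - x) * (x - A)
  have hX : ∀ t, HasDerivAt X (g (X t) - p (X t) * Y t) t := fun t => (hode t).fst
  have hden : ∀ t, 0 < a * X t ^ 2 + b * X t + 1 := fun t => holling_denom_pos ha hb (hpos t).1
  have hpred : ∀ t, 0 < p (X t) * Y t :=
    fun t => mul_pos (hp _ ▸ div_pos (hpos t).1 (hden t)) (hpos t).2
  have hXc : Continuous X := continuous_iff_continuousAt.2 fun t => (hX t).continuousAt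
  have hXper : Periodic X T := fun t => congrArg Prod.fst (hperiodic t)
  obtain ⟨t₁, hmax⟩ := hXper.exists_forall_le_of_continuous hT.ne' hXc
  obtain ⟨t₀, hmin⟩ := hXper.exists_forall_ge_of_continuous hT.ne' hXc
  have hgrowth : ∀ t, IsLocalExtr X t → X t ∈ Ioo A K := fun t hext =>
    mem_Ioo_of_allee_growth_pos (hpos t).1 hA2
      (show 0 < g (X t) from (growth_eq_predation_of_isLocalExtr (hX t) hext).symm ▸ hpred t)
  have hXmax : X t₁ < K := (hgrowth t₁ (.inr (.of_forall hmax))).2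
  have hXmin : A < X t₀ := (hgrowth t₀ (.inl (.of_forall hmin))).1
  have hp_diff : DifferentiableAt ℝ p (X t₁) := by
    rw [funext hp]
    exact differentiableAt_id.div (by fun_prop) (hden t₁).ne'
  have hresp := le_response_of_isLocalMax hX (hode t₁).snd (by fun_prop) hp_diff (hpred t₁)
    (.of_forall hmax)
  rw [hp] at hresp
  exact fun t => ⟨max_le (hpos t).1.le (hXmin.trans_le (hmin t)).le, (hmax t).trans hXmax.le,
    (hpos t).2,
    fun hΔ => (hmax t).trans (le_larger_root_of_le_holling ha hd (hden t₁) hresp hΔ)⟩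

/-- Any closed orbit of `x' = x(K-x)(x-A) - p x · y`, `y' = y(p x - d)` in the positive
quadrant lies entirely in the strip `{(x,y) : max 0 A ≤ x ≤ min β K, y > 0}`, where `β`
is the larger root of `a d x² + (b d - 1) x + d = 0` (taken as `+∞` if no real roots). -/
theorem stmt_13 (a b K A d : ℝ) (ha : 0 < a) (hb : -2 * Real.sqrt a < b)
    (hK : 0 < K) (hA1 : -K < A) (hA2 : A < K) (hd : 0 < d)
    (p : ℝ → ℝ) (hp : ∀ x, p x = x / (a * x ^ 2 + b * x + 1))
    (γ : ℝ → ℝ × ℝ) (T : ℝ) (hT : 0 < T)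
    (hperiodic : ∀ t, γ (t + T) = γ t)
    (hnonconst : ∃ t₁ t₂, γ t₁ ≠ γ t₂)
    (hpos : ∀ t, 0 < (γ t).1 ∧ 0 < (γ t).2)
    (hode : ∀ t, HasDerivAt γ
      ((γ t).1 * (K - (γ t).1) * ((γ t).1 - A) - p (γ t).1 * (γ t).2,
       (γ t).2 * (p (γ t).1 - d)) t) :
    ∀ t, max 0 A ≤ (γ t).1 ∧ (γ t).1 ≤ K ∧ 0 < (γ t).2 ∧
      ((b * d - 1) ^ 2 - 4 * a * d ^ 2 ≥ 0 →
        (γ t).1 ≤ (1 - b * d + Real.sqrt ((b * d - 1) ^ 2 - 4 * a * d ^ 2)) / (2 * a * d)) :=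
  stmt_13_general a b K A d ha hb hA2 hd p hp γ T hT hperiodic hpos hode
end

section
/- Under the change of variables x₁=ln x, y₁=ln y and time rescaling dτ=dt/(ax²+bx+1), the system x'=x(K-x)(x-A)-p(x)y, y'=y(p(x)-d) on the open positive quadrant transforms to dx₁/dτ=G(e^{x₁})-e^{y₁}, dy₁/dτ=-(a d e^{2x₁}+(bd-1)e^{x₁}+d), whose divergence is e^{x₁}G'(e^{x₁}). -/
/-! The positive quadrant is mapped diffeomorphically onto the plane by `(ln x, ln y)`. Multiplying
the vector field by `(a x² + b x + 1) / x` resp. `(a x² + b x + 1) / y` (the logarithmic derivative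
combined with the time rescaling) clears the denominator of `p`; this is legitimate because
`a x² + b x + 1 = (√a x - 1)² + (b + 2√a) x > 0` for `x > 0`. In the new system `dy₁/dτ` does not
depend on `y₁`, so the divergence is `∂/∂x₁ G(e^{x₁}) = e^{x₁} G'(e^{x₁})`. -/

open Real

lemma mul_sq_add_mul_add_one_pos {a b x : ℝ} (ha : 0 ≤ a) (hb : -2 * √a < b) (hx : 0 < x) :
    0 < a * x ^ 2 + b * x + 1 := by
  have hsplit : a * x ^ 2 + b * x + 1 = (√a * x - 1) ^ 2 + (b + 2 * √a) * x := by
    linear_combination -x ^ 2 * sq_sqrt ha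
  rw [hsplit]
  have := mul_pos (show 0 < b + 2 * √a by linarith) hx
  positivity

lemma deriv_comp_exp_sub_const {G : ℝ → ℝ} {u : ℝ} (hG : DifferentiableAt ℝ G (exp u)) (c : ℝ) :
    deriv (fun v => G (exp v) - c) u = exp u * deriv G (exp u) := by
  rw [deriv_sub_const]
  exact (hG.hasDerivAt.comp u (hasDerivAt_exp u)).deriv.trans (mul_comm _ _)

theorem stmt_15_general (a b K A d : ℝ) (ha : 0 < a) (hb : -2 * Real.sqrt a < b)
    (p G : ℝ → ℝ)
    (hp : ∀ x, p x = x / (a * x ^ 2 + b * x + 1))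
    (hG : ∀ x, G x = (x - A) * (K - x) * (a * x ^ 2 + b * x + 1)) :
    (∀ x > 0, ∀ y > 0,
      (a * x ^ 2 + b * x + 1) / x * (x * (K - x) * (x - A) - p x * y) =
        G (Real.exp (Real.log x)) - Real.exp (Real.log y) ∧
      (a * x ^ 2 + b * x + 1) / y * (y * (p x - d)) =
        -(a * d * Real.exp (Real.log x) ^ 2 + (b * d - 1) * Real.exp (Real.log x) + d)) ∧
    (∀ x₁ y₁ : ℝ,
      deriv (fun u => G (Real.exp u) - Real.exp y₁) x₁ +
        deriv (fun v => -(a * d * Real.exp x₁ ^ 2 + (b * d - 1) * Real.exp x₁ + d) + 0 * v) y₁ =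
      Real.exp x₁ * deriv G (Real.exp x₁)) := by
  refine ⟨fun x hx y hy => ?_, fun x₁ y₁ => ?_⟩
  · have hq := (mul_sq_add_mul_add_one_pos ha.le hb hx).ne'
    rw [exp_log hx, exp_log hy, hG, hp]
    generalize hq_def : a * x ^ 2 + b * x + 1 = q at hq ⊢
    constructor
    · field_simp
    · field_simp
      rw [← hq_def]
      ring
  · have hGdiff : DifferentiableAt ℝ G (exp x₁) := by
      rw [funext hG]
      fun_prop
    rw [deriv_comp_exp_sub_const hGdiff]
    simp

/-- Under `x₁ = ln x`, `y₁ = ln y` and time rescaling `dτ = dt/(a x² + b x + 1)`, the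
system `x' = x(K-x)(x-A) - p x · y`, `y' = y(p x - d)` transforms to
`dx₁/dτ = G(e^{x₁}) - e^{y₁}`, `dy₁/dτ = -(a d e^{2x₁} + (b d - 1)e^{x₁} + d)`,
whose divergence is `e^{x₁} G'(e^{x₁})`. -/
theorem stmt_15 (a b K A d : ℝ) (ha : 0 < a) (hb : -2 * Real.sqrt a < b)
    (hK : 0 < K) (hA1 : -K < A) (hA2 : A < K) (hd : 0 < d)
    (p G : ℝ → ℝ)
    (hp : ∀ x, p x = x / (a * x ^ 2 + b * x + 1))
    (hG : ∀ x, G x = (x - A) * (K - x) * (a * x ^ 2 + b * x + 1)) :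
    (∀ x > 0, ∀ y > 0,
      (a * x ^ 2 + b * x + 1) / x * (x * (K - x) * (x - A) - p x * y) =
        G (Real.exp (Real.log x)) - Real.exp (Real.log y) ∧
      (a * x ^ 2 + b * x + 1) / y * (y * (p x - d)) =
        -(a * d * Real.exp (Real.log x) ^ 2 + (b * d - 1) * Real.exp (Real.log x) + d)) ∧
    (∀ x₁ y₁ : ℝ,
      deriv (fun u => G (Real.exp u) - Real.exp y₁) x₁ +
        deriv (fun v => -(a * d * Real.exp x₁ ^ 2 + (b * d - 1) * Real.exp x₁ + d) + 0 * v) y₁ =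
      Real.exp x₁ * deriv G (Real.exp x₁)) :=
  stmt_15_general a b K A d ha hb p G hp hG
end

section
/- For H(x) = -d(ax²/2 + x/α + ln((α-x)/α)) with 0<α and a>0, d>0, there exists a smooth function θ(x) = -x + μ₂x² + O(x³) defined near 0 with H(θ(x)) = H(x), and μ₂ = -2/(3α(1-aα²)); in particular μ₂<0 when aα²<1. -/
open Filter Topology

lemma myAnalyticAt_deriv {f : ℝ → ℝ} {x : ℝ} (h : AnalyticAt ℝ f x) :
    AnalyticAt ℝ (deriv f) x := by
  obtain ⟨s, hs, han⟩ := h.exists_mem_nhds_analyticOnNhd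
  exact han.deriv x (mem_of_mem_nhds hs)

lemma myOfScalars_coeff (c : ℕ → ℝ) (n : ℕ) :
    (FormalMultilinearSeries.ofScalars ℝ c).coeff n = c n := by
  simp [FormalMultilinearSeries.coeff, FormalMultilinearSeries.ofScalars,
    List.ofFn_const, Pi.one_def]

/-- For `H x = -d(a x²/2 + x/α + ln((α-x)/α))` with `0 < α`, `a, d > 0` and `aα² < 1`,
there is a smooth `θ` near `0` with `θ x = -x + μ₂ x² + O(x³)` and `H (θ x) = H x`,
where `μ₂ = -2/(3α(1 - aα²)) < 0`. -/
theorem stmt_16 (a d α : ℝ) (ha : 0 < a) (hd : 0 < d) (hα : 0 < α)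
    (haα : a * α ^ 2 < 1)
    (H : ℝ → ℝ)
    (hH : ∀ x, H x = -d * (a * x ^ 2 / 2 + x / α + Real.log ((α - x) / α))) :
    ∃ (θ : ℝ → ℝ) (ε : ℝ), 0 < ε ∧
      ContDiffOn ℝ (⊤ : ℕ∞) θ (Set.Ioo (-ε) ε) ∧
      (∀ x ∈ Set.Ioo (-ε) ε, H (θ x) = H x) ∧
      θ 0 = 0 ∧ deriv θ 0 = -1 ∧
      deriv (deriv θ) 0 = 2 * (-2 / (3 * α * (1 - a * α ^ 2))) ∧
      -2 / (3 * α * (1 - a * α ^ 2)) < 0 := by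
  have hα0 : α ≠ 0 := ne_of_gt hα
  have h1c : 0 < 1 - a * α ^ 2 := by linarith
  -- the power series coefficients of H at 0
  set c : ℕ → ℝ := fun n =>
    if n = 2 then d * (1 - a * α ^ 2) / (2 * α ^ 2)
    else if 3 ≤ n then d / (n * α ^ n) else 0 with hc
  have hc0 : c 0 = 0 := by simp [hc]
  have hc1 : c 1 = 0 := by simp [hc]
  have hc2 : c 2 = d * (1 - a * α ^ 2) / (2 * α ^ 2) := by simp [hc]
  have hc3 : c 3 = d / (3 * α ^ 3) := by norm_num [hc]
  have hc2pos : 0 < c 2 := by rw [hc2]; positivity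
  -- H has this power series at 0
  have hp : HasFPowerSeriesAt H (FormalMultilinearSeries.ofScalars ℝ c) 0 := by
    rw [hasFPowerSeriesAt_iff]
    have hev : ∀ᶠ z in 𝓝 (0 : ℝ), |z| < α := by
      filter_upwards [Metric.ball_mem_nhds (0 : ℝ) hα] with z hz
      simpa [Real.dist_eq] using hz
    filter_upwards [hev] with z hz
    have habs : |z / α| < 1 := by
      rw [abs_div, abs_of_pos hα, div_lt_one hα]; exact hz
    have hlog := Real.hasSum_pow_div_log_of_abs_lt_one habs
    have h1 := hlog.mul_left d
    have h2 := (hasSum_nat_add_iff'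
      (f := fun n : ℕ => d * ((z / α) ^ (n + 1) / ((n : ℝ) + 1))) 1).2 h1
    have h3 : HasSum (fun n : ℕ => if n = 0 then -(d * a * z ^ 2 / 2) else 0)
        (-(d * a * z ^ 2 / 2)) := hasSum_ite_eq 0 _
    have h4 := h2.add h3
    have heq : ∀ n : ℕ,
        (d * ((z / α) ^ (n + 1 + 1) / ((n + 1 : ℕ) + 1 : ℝ))
          + if n = 0 then -(d * a * z ^ 2 / 2) else 0) = c (n + 2) * z ^ (n + 2) := by
      intro n
      match n with
      | 0 =>
        simp only [hc]
        norm_num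
        field_simp
        ring
      | (m + 1) =>
        have h2n : ¬ (m + 3 = 2) := by omega
        have h3n : 3 ≤ m + 3 := by omega
        simp only [hc, if_neg h2n, if_pos h3n, if_neg (Nat.succ_ne_zero m), add_zero]
        push_cast
        have hαn : (α : ℝ) ^ (m + 1 + 2) ≠ 0 := pow_ne_zero _ hα0
        have hzz : z ^ (m + 1 + 2) = (z / α) ^ (m + 1 + 2) * α ^ (m + 1 + 2) := by
          rw [div_pow, div_mul_cancel₀ _ hαn]
        rw [hzz]
        have hM : ((m : ℝ) + 1 + 1 + 1) ≠ 0 := by positivity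
        have hM' : ((m : ℝ) + 1 + 2) ≠ 0 := by positivity
        field_simp
        ring
    simp only [heq] at h4
    have hsum0 : ∑ i ∈ Finset.range 2, c i * z ^ i = 0 := by
      simp [Finset.sum_range_succ, hc0, hc1]
    have hHz : H (0 + z) - ∑ i ∈ Finset.range 2, c i * z ^ i
        = (d * -Real.log (1 - z / α) -
            ∑ i ∈ Finset.range 1, d * ((z / α) ^ (i + 1) / ((i : ℝ) + 1))
          + -(d * a * z ^ 2 / 2)) := by
      rw [hsum0, sub_zero, zero_add, hH]
      have hlogeq : Real.log ((α - z) / α) = Real.log (1 - z / α) := by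
        rw [show (α - z) / α = 1 - z / α by field_simp]
      rw [hlogeq]
      simp only [Finset.sum_range_one]
      push_cast
      field_simp
      ring
    have h6 : HasSum (fun n => c n * z ^ n) (H (0 + z)) := by
      refine (hasSum_nat_add_iff' (f := fun n : ℕ => c n * z ^ n) 2).1 ?_
      rw [hHz]
      exact h4
    have hcoe : ∀ n : ℕ, z ^ n • (FormalMultilinearSeries.ofScalars ℝ c).coeff n
        = c n * z ^ n := by
      intro n; rw [myOfScalars_coeff, smul_eq_mul, mul_comm]
    simpa only [hcoe] using h6
  -- basic facts about H at 0
  have hH0 : H 0 = 0 := by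
    rw [hH]; simp [div_self hα0]
  have hH1 : deriv H 0 = 0 := by
    have h := hp.deriv
    rw [show ((FormalMultilinearSeries.ofScalars ℝ c) 1 fun _ => 1)
        = (FormalMultilinearSeries.ofScalars ℝ c).coeff 1 from rfl, myOfScalars_coeff] at h
    rw [h, hc1]
  -- the analytic factor g with H z = z ^ 2 * g z
  set g : ℝ → ℝ := dslope (dslope H 0) 0 with hgdef
  have hq : HasFPowerSeriesAt g
      ((FormalMultilinearSeries.ofScalars ℝ c).fslope.fslope) 0 :=
    hp.has_fpower_series_dslope_fslope.has_fpower_series_dslope_fslope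
  have hganal : AnalyticAt ℝ g 0 := hq.analyticAt
  have hg0 : g 0 = c 2 := by
    have h := (hp.has_fpower_series_dslope_fslope).deriv
    have h2 : g 0 = deriv (dslope H 0) 0 := dslope_same _ _
    rw [h2, h]
    rw [show ((FormalMultilinearSeries.ofScalars ℝ c).fslope 1 fun _ => 1)
        = (FormalMultilinearSeries.ofScalars ℝ c).fslope.coeff 1 from rfl,
      FormalMultilinearSeries.coeff_fslope, myOfScalars_coeff]
  have hg1 : deriv g 0 = c 3 := by
    have h := hq.deriv
    rw [show ((FormalMultilinearSeries.ofScalars ℝ c).fslope.fslope 1 fun _ => 1)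
        = (FormalMultilinearSeries.ofScalars ℝ c).fslope.fslope.coeff 1 from rfl,
      FormalMultilinearSeries.coeff_fslope, FormalMultilinearSeries.coeff_fslope,
      myOfScalars_coeff] at h
    exact h
  have hfact : ∀ z : ℝ, H z = z ^ 2 * g z := by
    intro z
    have h1 := sub_smul_dslope H 0 z
    have h2 := sub_smul_dslope (dslope H 0) 0 z
    have h3 : dslope H 0 0 = 0 := by rw [dslope_same]; exact hH1
    simp only [sub_zero, smul_eq_mul, hH0, h3] at h1 h2
    calc H z = z * dslope H 0 z := h1.symm
    _ = z * (z * g z) := by rw [h2]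
    _ = z ^ 2 * g z := by ring
  -- positivity of g near 0
  have hgpos : ∀ᶠ x in 𝓝 (0 : ℝ), 0 < g x := by
    have htd : Filter.Tendsto g (𝓝 0) (𝓝 (g 0)) := hganal.continuousAt.tendsto
    exact htd.eventually (eventually_gt_nhds (by rw [hg0]; exact hc2pos))
  -- the analytic square root s and G x = x * s x
  set s : ℝ → ℝ := fun x => Real.sqrt (g x) with hsdef
  have hsev : ∀ᶠ x in 𝓝 (0 : ℝ), AnalyticAt ℝ s x := by
    filter_upwards [hganal.eventually_analyticAt, hgpos] with x h1 h2
    exact ((Real.contDiffAt_sqrt (n := (⊤ : WithTop ℕ∞)) h2.ne').comp x h1.contDiffAt).analyticAt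
  have hsanal : AnalyticAt ℝ s 0 := hsev.self_of_nhds
  have hs0 : s 0 = Real.sqrt (c 2) := by rw [hsdef]; simp [hg0]
  have hs0pos : 0 < s 0 := by rw [hs0]; exact Real.sqrt_pos.2 hc2pos
  set G : ℝ → ℝ := fun x => x * s x with hGdef
  have hGev : ∀ᶠ x in 𝓝 (0 : ℝ), AnalyticAt ℝ G x := by
    filter_upwards [hsev] with x hx
    exact analyticAt_id.mul hx
  have hGanal : AnalyticAt ℝ G 0 := hGev.self_of_nhds
  have hG0 : G 0 = 0 := by simp [hGdef]
  have hsd0 : HasDerivAt s (c 3 / (2 * Real.sqrt (c 2))) 0 := by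
    have hgd : HasDerivAt g (c 3) 0 := by
      have h := hganal.differentiableAt.hasDerivAt
      rwa [hg1] at h
    have h := hgd.sqrt (by rw [hg0]; exact hc2pos.ne')
    rwa [hg0] at h
  have hGd : HasDerivAt G (s 0) 0 := by
    have h := (hasDerivAt_id (0 : ℝ)).fun_mul hsd0
    simpa using h
  -- the inverse function setup
  have hGc : ContDiffAt ℝ (⊤ : WithTop ℕ∞) G 0 := hGanal.contDiffAt
  set e : ℝ ≃L[ℝ] ℝ :=
    ContinuousLinearEquiv.unitsEquivAut ℝ (Units.mk0 (s 0) hs0pos.ne') with hedef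
  have hGfd : HasFDerivAt G (e : ℝ →L[ℝ] ℝ) 0 := by
    have h := hGd.hasFDerivAt
    have he : (e : ℝ →L[ℝ] ℝ) = ContinuousLinearMap.smulRight (1 : ℝ →L[ℝ] ℝ) (s 0) := by
      refine ContinuousLinearMap.ext fun t => ?_
      simp [hedef, ContinuousLinearEquiv.unitsEquivAut_apply]
    rw [he]
    exact h
  have hn1 : (⊤ : WithTop ℕ∞) ≠ 0 := by simp
  have hstrict : HasStrictFDerivAt G (e : ℝ →L[ℝ] ℝ) 0 := hGc.hasStrictFDerivAt' hGfd hn1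
  set Ginv : ℝ → ℝ := hGc.localInverse hGfd hn1 with hGinvdef
  have hGinvC : ContDiffAt ℝ (⊤ : WithTop ℕ∞) Ginv 0 := by
    have h := hGc.to_localInverse (f' := e) hGfd hn1
    rwa [hG0] at h
  have hGinv0 : Ginv 0 = 0 := by
    have h := hGc.localInverse_apply_image (f' := e) hGfd hn1
    rwa [hG0] at h
  have hright : ∀ᶠ y in 𝓝 (0 : ℝ), G (Ginv y) = y := by
    have h := hstrict.eventually_right_inverse
    rwa [hG0] at h
  -- define θ
  set θ : ℝ → ℝ := fun x => Ginv (-(G x)) with hθdef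
  have hθ0 : θ 0 = 0 := by
    rw [hθdef]; simp only [hG0, neg_zero]; exact hGinv0
  have hθca : ContDiffAt ℝ (⊤ : WithTop ℕ∞) θ 0 := by
    have h1 : ContDiffAt ℝ (⊤ : WithTop ℕ∞) (fun x => -(G x)) 0 := hGc.neg
    have h2 : ContDiffAt ℝ (⊤ : WithTop ℕ∞) Ginv ((fun x => -(G x)) 0) := by
      simpa [hG0] using hGinvC
    exact h2.comp 0 h1
  have hθanal : AnalyticAt ℝ θ 0 := hθca.analyticAt
  have hθev : ∀ᶠ x in 𝓝 (0 : ℝ), AnalyticAt ℝ θ x := hθanal.eventually_analyticAt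
  have hθtendsto : Filter.Tendsto θ (𝓝 0) (𝓝 0) := by
    have h := hθanal.continuousAt.tendsto
    rwa [hθ0] at h
  -- the key identity G (θ x) = -(G x)
  have hGθ : ∀ᶠ x in 𝓝 (0 : ℝ), G (θ x) = -(G x) := by
    have h1 : Filter.Tendsto (fun x => -(G x)) (𝓝 0) (𝓝 0) := by
      have := (hGanal.continuousAt.tendsto).neg
      simpa [hG0] using this
    exact h1.eventually hright
  -- H (θ x) = H x near 0
  have hHG2 : ∀ᶠ y in 𝓝 (0 : ℝ), H y = (G y) ^ 2 := by
    filter_upwards [hgpos] with y hy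
    rw [hfact y, hGdef]
    simp only [mul_pow]
    rw [Real.sq_sqrt hy.le]
  have hHθ : ∀ᶠ x in 𝓝 (0 : ℝ), H (θ x) = H x := by
    filter_upwards [hθtendsto.eventually hHG2, hGθ, hHG2] with x h1 h2 h3
    rw [h1, h2, neg_pow, ← h3]
    simp
  -- first derivative of θ at 0
  have hGinvd : HasDerivAt Ginv (s 0)⁻¹ 0 := by
    have h := hstrict.to_localInverse.hasFDerivAt
    rw [hG0] at h
    rw [hasDerivAt_iff_hasFDerivAt]
    have he : (e.symm : ℝ →L[ℝ] ℝ) = ContinuousLinearMap.smulRight (1 : ℝ →L[ℝ] ℝ) (s 0)⁻¹ := by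
      refine ContinuousLinearMap.ext fun t => ?_
      simp [hedef, ContinuousLinearEquiv.unitsEquivAut_apply_symm]
    rwa [he] at h
  have hθd : HasDerivAt θ (-1) 0 := by
    have hneg : HasDerivAt (fun x => -(G x)) (-(s 0)) 0 := hGd.neg
    have hgi : HasDerivAt Ginv (s 0)⁻¹ ((fun x => -(G x)) 0) := by
      simpa [hG0] using hGinvd
    have h := HasDerivAt.comp 0 hgi hneg
    have hval : (s 0)⁻¹ * -(s 0) = -1 := by field_simp
    rw [hval] at h
    exact h
  have hθderiv : deriv θ 0 = -1 := hθd.deriv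
  -- second derivative computation
  have hderivGev : ∀ᶠ x in 𝓝 (0 : ℝ), deriv G x = s x + x * deriv s x := by
    filter_upwards [hsev] with x hx
    have h := ((hasDerivAt_id x).fun_mul hx.differentiableAt.hasDerivAt).deriv
    simpa using h
  have hds_anal : AnalyticAt ℝ (deriv s) 0 := myAnalyticAt_deriv hsanal
  have hG2 : deriv (deriv G) 0 = c 3 / Real.sqrt (c 2) := by
    have heq : deriv G =ᶠ[𝓝 (0 : ℝ)] fun x => s x + x * deriv s x := hderivGev
    rw [heq.deriv_eq]
    have hsum : HasDerivAt (fun x => s x + x * deriv s x)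
        (c 3 / (2 * Real.sqrt (c 2)) +
          (1 * deriv s 0 + 0 * deriv (deriv s) 0)) 0 :=
      hsd0.add ((hasDerivAt_id 0).mul hds_anal.differentiableAt.hasDerivAt)
    rw [hsum.deriv, hsd0.deriv]
    field_simp
    ring
  have hdG_anal : AnalyticAt ℝ (deriv G) 0 := myAnalyticAt_deriv hGanal
  have hdGd : HasDerivAt (deriv G) (deriv (deriv G) 0) 0 :=
    hdG_anal.differentiableAt.hasDerivAt
  -- differentiate the identity G (θ x) = -(G x)
  have hEq : (fun x => G (θ x)) =ᶠ[𝓝 (0 : ℝ)] fun x => -(G x) := hGθ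
  have hEqd := hEq.deriv
  have hchain : ∀ᶠ x in 𝓝 (0 : ℝ),
      deriv (fun y => G (θ y)) x = deriv G (θ x) * deriv θ x := by
    filter_upwards [hθev, hθtendsto.eventually hGev] with x h1 h2
    have h := (HasDerivAt.comp x (h2.differentiableAt.hasDerivAt)
      (h1.differentiableAt.hasDerivAt)).deriv
    simpa [Function.comp_def] using h
  have hF : (fun x => deriv G (θ x) * deriv θ x) =ᶠ[𝓝 (0 : ℝ)] fun x => -deriv G x := by
    filter_upwards [hchain, hEqd] with x h1 h2
    rw [← h1, h2, deriv.fun_neg]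
  have hu_anal : AnalyticAt ℝ (deriv θ) 0 := myAnalyticAt_deriv hθanal
  have hcompd : HasDerivAt (fun x => deriv G (θ x)) (deriv (deriv G) 0 * -1) 0 := by
    have hbase : HasDerivAt (deriv G) (deriv (deriv G) 0) (θ 0) := by rw [hθ0]; exact hdGd
    have h := HasDerivAt.comp 0 hbase hθd
    simpa [Function.comp_def] using h
  have hu : HasDerivAt (deriv θ) (deriv (deriv θ) 0) 0 :=
    hu_anal.differentiableAt.hasDerivAt
  have hprod := hcompd.fun_mul hu
  have hrhsd : HasDerivAt (fun x => -deriv G x) (-(deriv (deriv G) 0)) 0 := hdGd.neg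
  have hkey : (deriv (deriv G) 0 * -1) * deriv θ 0 + deriv G (θ 0) * deriv (deriv θ) 0
      = -(deriv (deriv G) 0) := by
    rw [← hprod.deriv, hF.deriv_eq, hrhsd.deriv]
  rw [hθderiv, hθ0, hGd.deriv] at hkey
  have hs0ne : s 0 ≠ 0 := hs0pos.ne'
  have hθ'' : deriv (deriv θ) 0 = 2 * (-2 / (3 * α * (1 - a * α ^ 2))) := by
    have hstep : s 0 * deriv (deriv θ) 0 = -2 * deriv (deriv G) 0 := by linarith
    have hsolve : deriv (deriv θ) 0 = -2 * deriv (deriv G) 0 / s 0 := by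
      rw [eq_div_iff hs0ne]
      linear_combination hstep
    rw [hsolve, hG2, hs0]
    have hsq : Real.sqrt (c 2) * Real.sqrt (c 2) = c 2 := Real.mul_self_sqrt hc2pos.le
    have hstep2 : -2 * (c 3 / Real.sqrt (c 2)) / Real.sqrt (c 2)
        = -2 * c 3 / (Real.sqrt (c 2) * Real.sqrt (c 2)) := by
      ring
    rw [hstep2, hsq, hc2, hc3]
    have h1cne : (1 - a * α ^ 2) ≠ 0 := h1c.ne'
    field_simp
  have hneg2 : -2 / (3 * α * (1 - a * α ^ 2)) < 0 := by
    apply div_neg_of_neg_of_pos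
    · norm_num
    · positivity
  have hall : ∀ᶠ x in 𝓝 (0 : ℝ), AnalyticAt ℝ θ x ∧ H (θ x) = H x := hθev.and hHθ
  rw [Metric.eventually_nhds_iff] at hall
  obtain ⟨ε, hε, hball⟩ := hall
  refine ⟨θ, ε, hε, ?_, ?_, hθ0, hθderiv, hθ'', hneg2⟩
  · intro x hx
    have hdist : dist x 0 < ε := by
      rw [Real.dist_eq, sub_zero]; exact abs_lt.2 ⟨hx.1, hx.2⟩
    exact ((hball hdist).1.contDiffAt).contDiffWithinAt
  · intro x hx
    have hdist : dist x 0 < ε := by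
      rw [Real.dist_eq, sub_zero]; exact abs_lt.2 ⟨hx.1, hx.2⟩
    exact (hball hdist).2
end
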